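/- In any orthomodular lattice, if a commutes with b and a commutes with c, then (a ∩₁ b) ∪₁ c = (a ∪₁ c) ∩₁ (b ∪₁ c), where x ∪₁ y := x ∪ (x' ∩ y) and x ∩₁ y := x ∩ (x' ∪ y). -/

import Mathlib

class Ortholattice (α : Type*) extends Lattice α, BoundedOrder α, Compl α where
  compl_compl : ∀ a : α, aᶜᶜ = a
  sup_compl : ∀ a : α, a ⊔ aᶜ = ⊤
  inf_compl : ∀ a : α, a ⊓ aᶜ = ⊥
  compl_antitone : ∀ a b : α, a ≤ b → bᶜ ≤ aᶜ

class OrthomodularLattice (α : Type*) extends Ortholattice α where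
  orthomodular : ∀ a b : α, a ≤ b → b = a ⊔ (aᶜ ⊓ b)

namespace OMLAux

variable {α : Type*} [OrthomodularLattice α]

lemma cc (a : α) : aᶜᶜ = a := Ortholattice.compl_compl a
lemma infc (a : α) : a ⊓ aᶜ = ⊥ := Ortholattice.inf_compl a
lemma supc (a : α) : a ⊔ aᶜ = ⊤ := Ortholattice.sup_compl a
lemma anti {a b : α} (h : a ≤ b) : bᶜ ≤ aᶜ := Ortholattice.compl_antitone a b h

lemma compl_sup (a b : α) : (a ⊔ b)ᶜ = aᶜ ⊓ bᶜ := by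
  apply le_antisymm (le_inf (anti le_sup_left) (anti le_sup_right))
  have h1 : a ⊔ b ≤ (aᶜ ⊓ bᶜ)ᶜ := by
    apply sup_le
    · have := anti (inf_le_left (a := aᶜ) (b := bᶜ)); rwa [cc] at this
    · have := anti (inf_le_right (a := aᶜ) (b := bᶜ)); rwa [cc] at this
  have := anti h1; rwa [cc] at this

lemma compl_inf (a b : α) : (a ⊓ b)ᶜ = aᶜ ⊔ bᶜ := by
  have h := compl_sup aᶜ bᶜ
  rw [cc, cc] at h
  rw [← h, cc]

/-- key orthomodular "sandwich" lemma -/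
lemma sandwich {x y : α} (h : x ≤ y) : y ⊓ (yᶜ ⊔ x) = x := by
  have h1 : x ≤ y ⊓ (yᶜ ⊔ x) := le_inf h le_sup_right
  have h2 := OrthomodularLattice.orthomodular x (y ⊓ (yᶜ ⊔ x)) h1
  have h3 : xᶜ ⊓ (y ⊓ (yᶜ ⊔ x)) = ⊥ := by
    have hle : xᶜ ⊓ (y ⊓ (yᶜ ⊔ x)) ≤ (y ⊓ xᶜ) ⊓ (y ⊓ xᶜ)ᶜ := by
      rw [compl_inf, cc]
      exact le_inf (le_inf (le_trans inf_le_right inf_le_left) inf_le_left)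
        (le_trans inf_le_right inf_le_right)
    exact le_bot_iff.mp (le_trans hle (le_of_eq (infc _)))
  rw [h3, sup_bot_eq] at h2
  exact h2

def C (a b : α) : Prop := a = (a ⊓ b) ⊔ (a ⊓ bᶜ)

lemma C.complr {a b : α} (h : C a b) : C a bᶜ := by
  unfold C at *; rw [cc, sup_comm]; exact h

lemma C.symm {a b : α} (h : C a b) : C b a := by
  unfold C at *
  set s := (b ⊓ a) ⊔ (b ⊓ aᶜ) with hs
  have hsb : s ≤ b := sup_le inf_le_left inf_le_left
  have h2 := OrthomodularLattice.orthomodular s b hsb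
  have h3 : sᶜ ⊓ b = ⊥ := by
    have e1 : bᶜ ⊔ a = bᶜ ⊔ (a ⊓ b) := by
      conv_lhs => rw [h]
      rw [← sup_assoc, sup_comm bᶜ (a ⊓ b), sup_assoc]
      congr 1
      exact sup_eq_left.mpr inf_le_right
    have e2 : b ⊓ (bᶜ ⊔ a) = a ⊓ b := by
      rw [e1, sandwich (inf_le_right : a ⊓ b ≤ b)]
    have hsc : sᶜ = (bᶜ ⊔ aᶜ) ⊓ (bᶜ ⊔ a) := by
      rw [hs, compl_sup, compl_inf, compl_inf, cc]
    have hb1 : sᶜ ⊓ b ≤ a ⊓ b := by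
      have : sᶜ ⊓ b ≤ (bᶜ ⊔ a) ⊓ b :=
        inf_le_inf_right b (le_trans (le_of_eq hsc) inf_le_right)
      rw [inf_comm (bᶜ ⊔ a) b, e2] at this
      exact this
    have hb2 : sᶜ ⊓ b ≤ (a ⊓ b)ᶜ := by
      rw [compl_inf]
      refine le_trans inf_le_left (le_trans (le_of_eq hsc) (le_trans inf_le_left ?_))
      rw [sup_comm]
    exact le_bot_iff.mp (le_trans (le_inf hb1 hb2) (le_of_eq (infc _)))
  rw [h3, sup_bot_eq] at h2
  exact h2

lemma C.eq {a b : α} (h : C a b) : a = (a ⊓ b) ⊔ (a ⊓ bᶜ) := h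

lemma C.compll {a b : α} (h : C a b) : C aᶜ b := (h.symm.complr).symm

lemma C_compl (a : α) : C a aᶜ := by simp [C, cc, infc]

lemma C_inf_eq {a b : α} (h : C a b) : a ⊓ (aᶜ ⊔ b) = a ⊓ b := by
  have hy : (a ⊓ bᶜ)ᶜ = aᶜ ⊔ b := by rw [compl_inf, cc]
  have hx : a ⊓ b ≤ (a ⊓ bᶜ)ᶜ := by
    rw [hy]; exact le_trans inf_le_right le_sup_right
  have hs := sandwich hx
  rw [cc, hy] at hs
  calc a ⊓ (aᶜ ⊔ b) = ((a ⊓ b) ⊔ (a ⊓ bᶜ)) ⊓ (aᶜ ⊔ b) := by rw [← h.eq]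
    _ = (aᶜ ⊔ b) ⊓ ((a ⊓ bᶜ) ⊔ (a ⊓ b)) := by
        rw [inf_comm ((a ⊓ b) ⊔ (a ⊓ bᶜ)) (aᶜ ⊔ b), sup_comm (a ⊓ b) (a ⊓ bᶜ)]
    _ = a ⊓ b := hs

lemma FH1 {a b c : α} (h1 : C a b) (h2 : C a c) :
    a ⊓ (b ⊔ c) = (a ⊓ b) ⊔ (a ⊓ c) := by
  have hfe : (a ⊓ b) ⊔ (a ⊓ c) ≤ a ⊓ (b ⊔ c) :=
    sup_le (le_inf inf_le_left (le_trans inf_le_right le_sup_left))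
           (le_inf inf_le_left (le_trans inf_le_right le_sup_right))
  have h2' := OrthomodularLattice.orthomodular _ _ hfe
  have hbot : ((a ⊓ b) ⊔ (a ⊓ c))ᶜ ⊓ (a ⊓ (b ⊔ c)) = ⊥ := by
    set g := ((a ⊓ b) ⊔ (a ⊓ c))ᶜ ⊓ (a ⊓ (b ⊔ c)) with hg
    have hga : g ≤ a := le_trans inf_le_right inf_le_left
    have hgb : g ≤ bᶜ := by
      have t1 : g ≤ a ⊓ (aᶜ ⊔ bᶜ) := le_inf hga (le_trans inf_le_left
        (by rw [compl_sup, compl_inf]; exact inf_le_left))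
      rw [C_inf_eq h1.complr] at t1
      exact le_trans t1 inf_le_right
    have hgc : g ≤ cᶜ := by
      have t1 : g ≤ a ⊓ (aᶜ ⊔ cᶜ) := le_inf hga (le_trans inf_le_left
        (by rw [compl_sup, compl_inf a c]; exact inf_le_right))
      rw [C_inf_eq h2.complr] at t1
      exact le_trans t1 inf_le_right
    have hfin : g ≤ (b ⊔ c) ⊓ (b ⊔ c)ᶜ :=
      le_inf (le_trans inf_le_right inf_le_right) (by rw [compl_sup]; exact le_inf hgb hgc)
    exact le_bot_iff.mp (le_trans hfin (le_of_eq (infc _)))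
  rw [hbot, sup_bot_eq] at h2'
  exact h2'

lemma FH2 {a b c : α} (h1 : C c a) (h2 : C c b) :
    a ⊓ (b ⊔ c) = (a ⊓ b) ⊔ (a ⊓ c) := by
  have hfe : (a ⊓ b) ⊔ (a ⊓ c) ≤ a ⊓ (b ⊔ c) :=
    sup_le (le_inf inf_le_left (le_trans inf_le_right le_sup_left))
           (le_inf inf_le_left (le_trans inf_le_right le_sup_right))
  have h2' := OrthomodularLattice.orthomodular _ _ hfe
  have hbot : ((a ⊓ b) ⊔ (a ⊓ c))ᶜ ⊓ (a ⊓ (b ⊔ c)) = ⊥ := by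
    set g := ((a ⊓ b) ⊔ (a ⊓ c))ᶜ ⊓ (a ⊓ (b ⊔ c)) with hg
    have hga : g ≤ a := le_trans inf_le_right inf_le_left
    have hgc : g ≤ cᶜ := by
      have t1 : g ≤ a ⊓ (aᶜ ⊔ cᶜ) := le_inf hga (le_trans inf_le_left
        (by rw [compl_sup, compl_inf a c]; exact inf_le_right))
      rw [C_inf_eq (h1.symm.complr)] at t1
      exact le_trans t1 inf_le_right
    have hgb : g ≤ b := by
      have t1 : g ≤ cᶜ ⊓ (b ⊔ c) := le_inf hgc (le_trans inf_le_right inf_le_right)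
      have t2 : cᶜ ⊓ (b ⊔ c) = cᶜ ⊓ b := by
        rw [FH1 h2.compll ((C_compl c).symm), inf_comm cᶜ c, infc, sup_bot_eq]
      rw [t2] at t1
      exact le_trans t1 inf_le_right
    have hab' : g ≤ (a ⊓ b)ᶜ := le_trans inf_le_left
      (by rw [compl_sup]; exact inf_le_left)
    have hfin : g ≤ (a ⊓ b) ⊓ (a ⊓ b)ᶜ := le_inf (le_inf hga hgb) hab'
    exact le_bot_iff.mp (le_trans hfin (le_of_eq (infc _)))
  rw [hbot, sup_bot_eq] at h2'
  exact h2'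

lemma dFH2 {a b c : α} (h1 : C c a) (h2 : C c b) :
    a ⊔ (b ⊓ c) = (a ⊔ b) ⊓ (a ⊔ c) := by
  have h := FH2 (h1.compll.complr) (h2.compll.complr)
  calc a ⊔ (b ⊓ c) = (aᶜ ⊓ (bᶜ ⊔ cᶜ))ᶜ := by
        rw [compl_inf, compl_sup, cc, cc, cc]
    _ = ((aᶜ ⊓ bᶜ) ⊔ (aᶜ ⊓ cᶜ))ᶜ := by rw [h]
    _ = (a ⊔ b) ⊓ (a ⊔ c) := by rw [compl_sup, compl_inf, compl_inf, cc, cc, cc]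

lemma C.sup {a b c : α} (h1 : C a b) (h2 : C a c) : C a (b ⊔ c) := by
  have e1 : (b ⊔ c) ⊓ a = (a ⊓ b) ⊔ (a ⊓ c) := by rw [inf_comm]; exact FH1 h1 h2
  have e2 : (b ⊔ c) ⊓ aᶜ = (aᶜ ⊓ b) ⊔ (aᶜ ⊓ c) := by
    rw [inf_comm]; exact FH1 h1.compll h2.compll
  have hba : C (b ⊔ c) a := by
    show b ⊔ c = ((b ⊔ c) ⊓ a) ⊔ ((b ⊔ c) ⊓ aᶜ)
    rw [e1, e2]
    conv_lhs => rw [h1.symm.eq, h2.symm.eq]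
    rw [inf_comm b a, inf_comm b aᶜ, inf_comm c a, inf_comm c aᶜ]
    ac_rfl
  exact hba.symm

lemma C.inf {a b c : α} (h1 : C a b) (h2 : C a c) : C a (b ⊓ c) := by
  have h := (h1.complr.sup h2.complr).complr
  have e : (bᶜ ⊔ cᶜ)ᶜ = b ⊓ c := by rw [compl_sup, cc, cc]
  rwa [e] at h

lemma main (a b c : α) (hab : C a b) (hac : C a c) :
    (a ⊓ (aᶜ ⊔ b)) ⊔ ((a ⊓ (aᶜ ⊔ b))ᶜ ⊓ c) =
      (a ⊔ (aᶜ ⊓ c)) ⊓ ((a ⊔ (aᶜ ⊓ c))ᶜ ⊔ (b ⊔ (bᶜ ⊓ c))) := by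
  set Y := b ⊔ (bᶜ ⊓ c) with hY
  have caY : C a Y := hab.sup (hab.complr.inf hac)
  have cAa : C aᶜ a := (C_compl a).symm
  -- simplify a ⊓ (aᶜ ⊔ b)
  rw [C_inf_eq hab]
  -- simplify a ⊔ (aᶜ ⊓ c)
  have F2 : a ⊔ (aᶜ ⊓ c) = a ⊔ c := by
    rw [dFH2 hac.symm hac.symm.complr, supc, top_inf_eq]
  rw [F2]
  -- expand LHS complement part
  have F3 : (a ⊓ b)ᶜ ⊓ c = (aᶜ ⊓ c) ⊔ (bᶜ ⊓ c) := by
    have h := FH2 (a := c) (b := bᶜ) (c := aᶜ) hac.compll hab.compll.complr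
    calc (a ⊓ b)ᶜ ⊓ c = c ⊓ (bᶜ ⊔ aᶜ) := by
          rw [compl_inf, inf_comm (aᶜ ⊔ bᶜ) c, sup_comm aᶜ bᶜ]
      _ = (c ⊓ bᶜ) ⊔ (c ⊓ aᶜ) := h
      _ = (aᶜ ⊓ c) ⊔ (bᶜ ⊓ c) := by
          rw [inf_comm c bᶜ, inf_comm c aᶜ, sup_comm (bᶜ ⊓ c) (aᶜ ⊓ c)]
  rw [F3]
  -- simplify RHS second factor
  have hT : Y ⊔ cᶜ = ⊤ := by
    have h1 : (bᶜ ⊓ c) ⊔ (bᶜ ⊓ c)ᶜ ≤ Y ⊔ cᶜ := by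
      apply sup_le (le_trans le_sup_right le_sup_left)
      rw [compl_inf, cc]
      exact sup_le (le_trans le_sup_left le_sup_left) le_sup_right
    exact top_unique (le_trans (le_of_eq (supc (bᶜ ⊓ c)).symm) h1)
  have F4 : (a ⊔ c)ᶜ ⊔ Y = aᶜ ⊔ Y := by
    calc (a ⊔ c)ᶜ ⊔ Y = Y ⊔ (cᶜ ⊓ aᶜ) := by
          rw [compl_sup, sup_comm (aᶜ ⊓ cᶜ) Y, inf_comm aᶜ cᶜ]
      _ = (Y ⊔ cᶜ) ⊓ (Y ⊔ aᶜ) := dFH2 caY.compll hac.compll.complr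
      _ = aᶜ ⊔ Y := by rw [hT, top_inf_eq, sup_comm Y aᶜ]
  rw [F4]
  -- expand RHS
  have F5 : (a ⊔ c) ⊓ (aᶜ ⊔ Y) = (Y ⊓ a) ⊔ ((Y ⊓ c) ⊔ (aᶜ ⊓ c)) := by
    have e1 : (a ⊔ c) ⊓ (Y ⊔ aᶜ) = ((a ⊔ c) ⊓ Y) ⊔ ((a ⊔ c) ⊓ aᶜ) :=
      FH2 (cAa.sup hac.compll) (caY.compll)
    have e2 : (a ⊔ c) ⊓ aᶜ = aᶜ ⊓ c := by
      rw [inf_comm (a ⊔ c) aᶜ, FH1 cAa hac.compll, inf_comm aᶜ a, infc, bot_sup_eq]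
    have e3 : (a ⊔ c) ⊓ Y = (Y ⊓ c) ⊔ (Y ⊓ a) := by
      rw [inf_comm (a ⊔ c) Y, sup_comm a c]
      exact FH2 caY hac
    calc (a ⊔ c) ⊓ (aᶜ ⊔ Y) = (a ⊔ c) ⊓ (Y ⊔ aᶜ) := by rw [sup_comm aᶜ Y]
      _ = ((a ⊔ c) ⊓ Y) ⊔ ((a ⊔ c) ⊓ aᶜ) := e1
      _ = ((Y ⊓ c) ⊔ (Y ⊓ a)) ⊔ (aᶜ ⊓ c) := by rw [e2, e3]
      _ = (Y ⊓ a) ⊔ ((Y ⊓ c) ⊔ (aᶜ ⊓ c)) := by ac_rfl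
  rw [F5]
  -- the two key component bounds
  have F6 : Y ⊓ a ≤ (a ⊓ b) ⊔ ((aᶜ ⊓ c) ⊔ (bᶜ ⊓ c)) := by
    have e : Y ⊓ a = (a ⊓ b) ⊔ (a ⊓ (bᶜ ⊓ c)) := by
      rw [inf_comm Y a]; exact FH1 hab (hab.complr.inf hac)
    rw [e]
    exact sup_le le_sup_left
      (le_trans inf_le_right (le_trans le_sup_right le_sup_right))
  have F7 : Y ⊓ c ≤ (a ⊓ b) ⊔ ((aᶜ ⊓ c) ⊔ (bᶜ ⊓ c)) := by
    have hd : Y ⊓ c = ((Y ⊓ c) ⊓ a) ⊔ ((Y ⊓ c) ⊓ aᶜ) := (caY.inf hac).symm.eq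
    calc Y ⊓ c = ((Y ⊓ c) ⊓ a) ⊔ ((Y ⊓ c) ⊓ aᶜ) := hd
      _ ≤ _ := by
        apply sup_le
        · exact le_trans (inf_le_inf_right a inf_le_left) F6
        · exact le_trans (le_inf inf_le_right (le_trans inf_le_left inf_le_right))
            (le_trans le_sup_left le_sup_right)
  -- final antisymmetry
  apply le_antisymm
  · apply sup_le
    · exact le_trans (le_inf (le_trans inf_le_right le_sup_left) inf_le_left) le_sup_left
    · apply sup_le
      · exact le_trans le_sup_right le_sup_right
      · refine le_trans (le_inf le_sup_right inf_le_right) (le_trans le_sup_left le_sup_right)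
  · exact sup_le F6 (sup_le F7 (le_trans le_sup_left le_sup_right))

end OMLAux

theorem stmt13 {α : Type*} [OrthomodularLattice α] (a b c : α) (hab : a = (a ⊓ b) ⊔ (a ⊓ bᶜ)) (hac : a = (a ⊓ c) ⊔ (a ⊓ cᶜ)) :
    (a ⊓ (aᶜ ⊔ b)) ⊔ ((a ⊓ (aᶜ ⊔ b))ᶜ ⊓ c) = (a ⊔ (aᶜ ⊓ c)) ⊓ ((a ⊔ (aᶜ ⊓ c))ᶜ ⊔ (b ⊔ (bᶜ ⊓ c))) := by
  exact OMLAux.main a b c hab hac
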